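/- Two finite EESs are pomset trace equivalent if and only if they are isomorphic; consequently for finite EESs the equivalences ≅, hereditary history preserving bisimilarity, history preserving bisimilarity, weak history preserving bisimilarity, pomset bisimilarity, and pomset trace equivalence all coincide. -/

import Mathlib

/-- A labelled prime event structure over alphabet `A`. -/
structure PES (A : Type*) where
  E : Type*
  le : E → E → Prop
  conflict : E → E → Prop
  lab : E → A
  le_refl : ∀ e, le e e
  le_trans : ∀ e e' e'', le e e' → le e' e'' → le e e''
  le_antisymm : ∀ e e', le e e' → le e' e → e = e'
  finite_past : ∀ e, Set.Finite {e' | le e' e ∧ e' ≠ e}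
  conflict_irrefl : ∀ e, ¬ conflict e e
  conflict_symm : ∀ e e', conflict e e' → conflict e' e
  conflict_inherit : ∀ e e' e'', le e e' → e ≠ e' → conflict e e'' → conflict e' e''

namespace PES

variable {A : Type*}

/-- A coherence space: a PES with empty (strict) causality. -/
def IsCS (P : PES A) : Prop := ∀ e e', P.le e e' → e = e'

/-- An elementary event structure: a PES with empty conflict. -/
def IsEES (P : PES A) : Prop := ∀ e e', ¬ P.conflict e e'

/-- Concurrency. -/
def co (P : PES A) (e e' : P.E) : Prop :=
  ¬ P.le e e' ∧ ¬ P.le e' e ∧ ¬ P.conflict e e'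

/-- Configurations: finite, conflict-free, downward-closed sets of events. -/
def Config (P : PES A) (X : Set P.E) : Prop :=
  X.Finite ∧ (∀ e ∈ X, ∀ e' ∈ X, ¬ P.conflict e e') ∧
    (∀ e ∈ X, ∀ e', P.le e' e → e' ∈ X)

/-- Single-event labelled transition between configurations. -/
def Trans (P : PES A) (X : Set P.E) (a : A) (X' : Set P.E) : Prop :=
  P.Config X ∧ P.Config X' ∧ ∃ e, e ∉ X ∧ X' = insert e X ∧ P.lab e = a

/-- `X` can perform the sequential trace `w`. -/
def TraceFrom (P : PES A) : Set P.E → List A → Prop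
  | X, [] => P.Config X
  | X, a :: w => ∃ X', P.Trans X a X' ∧ P.TraceFrom X' w

/-- Sequential traces of a PES. -/
def STr (P : PES A) (w : List A) : Prop := P.TraceFrom ∅ w

/-- Interleaving trace equivalence. -/
def ITrEq (P Q : PES A) : Prop := ∀ w : List A, P.STr w ↔ Q.STr w

/-- Interleaving bisimulation. -/
def IBisim (P Q : PES A) (R : Set P.E → Set Q.E → Prop) : Prop :=
  R ∅ ∅ ∧ ∀ X Y, R X Y →
    (∀ a X', P.Trans X a X' → ∃ Y', Q.Trans Y a Y' ∧ R X' Y') ∧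
    (∀ a Y', Q.Trans Y a Y' → ∃ X', P.Trans X a X' ∧ R X' Y')

/-- Interleaving bisimilarity. -/
def IBisimilar (P Q : PES A) : Prop := ∃ R, IBisim P Q R

/-- Step transition, labelled by the multiset of labels of a nonempty set of
pairwise concurrent events added at once. -/
def StepTrans (P : PES A) (X : Set P.E) (m : Multiset A) (X' : Set P.E) : Prop :=
  P.Config X ∧ P.Config X' ∧ X ⊆ X' ∧ ∃ G : Finset P.E, ↑G = X' \ X ∧ G.Nonempty ∧
    (∀ e ∈ G, ∀ e' ∈ G, e ≠ e' → P.co e e') ∧ Multiset.map P.lab G.val = m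

/-- `X` can perform the step trace `s`. -/
def StepTraceFrom (P : PES A) : Set P.E → List (Multiset A) → Prop
  | X, [] => P.Config X
  | X, m :: s => ∃ X', P.StepTrans X m X' ∧ P.StepTraceFrom X' s

/-- Step traces of a PES. -/
def StTr (P : PES A) (s : List (Multiset A)) : Prop := P.StepTraceFrom ∅ s

/-- Step trace equivalence. -/
def STrEq (P Q : PES A) : Prop := ∀ s : List (Multiset A), P.StTr s ↔ Q.StTr s

/-- Step bisimulation. -/
def SBisim (P Q : PES A) (R : Set P.E → Set Q.E → Prop) : Prop :=
  R ∅ ∅ ∧ ∀ X Y, R X Y →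
    (∀ m X', P.StepTrans X m X' → ∃ Y', Q.StepTrans Y m Y' ∧ R X' Y') ∧
    (∀ m Y', Q.StepTrans Y m Y' → ∃ X', P.StepTrans X m X' ∧ R X' Y')

/-- Step bisimilarity. -/
def SBisimilar (P Q : PES A) : Prop := ∃ R, SBisim P Q R

/-- `f` restricts to a label-preserving order-isomorphism from `X` onto `Y`. -/
def IsoOn (P Q : PES A) (f : P.E → Q.E) (X : Set P.E) (Y : Set Q.E) : Prop :=
  Set.BijOn f X Y ∧ (∀ e ∈ X, ∀ e' ∈ X, (P.le e e' ↔ Q.le (f e) (f e'))) ∧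
    ∀ e ∈ X, Q.lab (f e) = P.lab e

/-- The labelled posets induced by `X` and `Y` are isomorphic (same pomset). -/
def PIso (P Q : PES A) (X : Set P.E) (Y : Set Q.E) : Prop :=
  ∃ f, IsoOn P Q f X Y

/-- Pomset trace equivalence: same sets of pomsets of configurations. -/
def PTrEq (P Q : PES A) : Prop :=
  (∀ X, P.Config X → ∃ Y, Q.Config Y ∧ PIso P Q X Y) ∧
  (∀ Y, Q.Config Y → ∃ X, P.Config X ∧ PIso P Q X Y)

/-- Pomset transition: strictly extending a configuration. -/
def PomTrans (P : PES A) (X X' : Set P.E) : Prop :=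
  P.Config X ∧ P.Config X' ∧ X ⊂ X'

/-- Pomset bisimulation: matched extensions must add isomorphic pomsets. -/
def PBisim (P Q : PES A) (R : Set P.E → Set Q.E → Prop) : Prop :=
  R ∅ ∅ ∧ ∀ X Y, R X Y →
    (∀ X', P.PomTrans X X' →
      ∃ Y', Q.PomTrans Y Y' ∧ PIso P Q (X' \ X) (Y' \ Y) ∧ R X' Y') ∧
    (∀ Y', Q.PomTrans Y Y' →
      ∃ X', P.PomTrans X X' ∧ PIso P Q (X' \ X) (Y' \ Y) ∧ R X' Y')

/-- Pomset bisimilarity. -/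
def PBisimilar (P Q : PES A) : Prop := ∃ R, PBisim P Q R

/-- Weak history preserving bisimulation. -/
def WHBisim (P Q : PES A) (R : Set P.E → Set Q.E → Prop) : Prop :=
  R ∅ ∅ ∧ ∀ X Y, R X Y → PIso P Q X Y ∧
    (∀ a X', P.Trans X a X' → ∃ Y', Q.Trans Y a Y' ∧ R X' Y') ∧
    (∀ a Y', Q.Trans Y a Y' → ∃ X', P.Trans X a X' ∧ R X' Y')

/-- Weak history preserving bisimilarity. -/
def WHBisimilar (P Q : PES A) : Prop := ∃ R, WHBisim P Q R

/-- History preserving bisimulation: triples `(X, Y, f)`. -/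
def HBisim (P Q : PES A) (R : Set P.E → Set Q.E → (P.E → Q.E) → Prop) : Prop :=
  (∃ f, R ∅ ∅ f) ∧ ∀ X Y f, R X Y f → IsoOn P Q f X Y ∧
    (∀ a X', P.Trans X a X' →
      ∃ Y' f', Q.Trans Y a Y' ∧ R X' Y' f' ∧ ∀ e ∈ X, f' e = f e) ∧
    (∀ a Y', Q.Trans Y a Y' →
      ∃ X' f', P.Trans X a X' ∧ R X' Y' f' ∧ ∀ e ∈ X, f' e = f e)

/-- History preserving bisimilarity. -/
def HBisimilar (P Q : PES A) : Prop := ∃ R, HBisim P Q R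

/-- Closure under backward transitions, as needed for hereditary hp-bisimulations. -/
def Hereditary (P Q : PES A) (R : Set P.E → Set Q.E → (P.E → Q.E) → Prop) : Prop :=
  ∀ X Y f, R X Y f →
    (∀ a X', P.Trans X' a X → R X' (f '' X') f) ∧
    (∀ a Y', Q.Trans Y' a Y → R {e ∈ X | f e ∈ Y'} Y' f)

/-- Hereditary history preserving bisimilarity. -/
def HHBisimilar (P Q : PES A) : Prop := ∃ R, HBisim P Q R ∧ Hereditary P Q R

/-- Isomorphism of PESs. -/
def Iso (P Q : PES A) : Prop :=
  ∃ f : P.E ≃ Q.E, (∀ e e', P.le e e' ↔ Q.le (f e) (f e')) ∧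
    (∀ e e', P.conflict e e' ↔ Q.conflict (f e) (f e')) ∧
    ∀ e, Q.lab (f e) = P.lab e

end PES


/-!
An isomorphism transports configurations and transitions, so it is a hereditary history
preserving bisimulation and a pomset bisimulation. Every configuration of a PES is reached from
`∅` by single-event transitions (remove a maximal event), so a weak history preserving
bisimulation relates each configuration to one with the same pomset, and so does a pomset
bisimulation from `(∅, ∅)` in one step. Finally, in a finite EES the full event set is a
configuration whose pomset is the whole structure, so pomset trace equivalence forces isomorphism.
-/

namespace PES

open Set

variable {A : Type*}

section Basic

variable {P : PES A}

lemma conflict_of_le_of_conflict {e e' e'' : P.E} (hle : P.le e e') (h : P.conflict e e'') :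
    P.conflict e' e'' := by
  by_cases he : e = e'
  · exact he ▸ h
  · exact P.conflict_inherit e e' e'' hle he h

lemma not_conflict_of_le {e e' : P.E} (hle : P.le e e') : ¬ P.conflict e e' :=
  fun h => P.conflict_irrefl e' (conflict_of_le_of_conflict hle h)

lemma config_empty (P : PES A) : P.Config ∅ :=
  ⟨finite_empty, by simp, by simp⟩

lemma config_univ (hP : P.IsEES) [Finite P.E] : P.Config univ :=
  ⟨finite_univ, fun e _ e' _ => hP e e', fun _ _ _ _ => mem_univ _⟩

lemma config_setOf_le (e : P.E) : P.Config {e' | P.le e' e} := by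
  refine ⟨((P.finite_past e).insert e).subset fun e' he' => ?_, ?_, ?_⟩
  · by_cases h : e' = e
    · exact .inl h
    · exact .inr ⟨he', h⟩
  · intro e₁ he₁ e₂ he₂ h
    exact not_conflict_of_le he₂ (P.conflict_symm _ _ (conflict_of_le_of_conflict he₁ h))
  · exact fun e₁ he₁ e₂ he₂ => P.le_trans _ _ _ he₂ he₁

lemma exists_maximal {X : Set P.E} (hfin : X.Finite) (hne : X.Nonempty) :
    ∃ e ∈ X, ∀ e' ∈ X, P.le e e' → e' = e := by
  let _ : PartialOrder P.E :=
    { le := P.le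
      le_refl := P.le_refl
      le_trans := P.le_trans
      le_antisymm := P.le_antisymm }
  obtain ⟨e, he, hmax⟩ := hfin.exists_maximalFor id X hne
  exact ⟨e, he, fun e' he' hle => P.le_antisymm _ _ (hmax he' hle) hle⟩

lemma Config.trans_of_maximal {X : Set P.E} (hX : P.Config X) {e : P.E} (he : e ∈ X)
    (hmax : ∀ e' ∈ X, P.le e e' → e' = e) : P.Trans (X \ {e}) (P.lab e) X := by
  have hX' : P.Config (X \ {e}) := by
    refine ⟨hX.1.sdiff, fun e₁ he₁ e₂ he₂ => hX.2.1 e₁ he₁.1 e₂ he₂.1, ?_⟩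
    rintro e₁ ⟨he₁, hne⟩ e₂ hle
    exact ⟨hX.2.2 e₁ he₁ e₂ hle, fun h => hne (hmax e₁ he₁ (h ▸ hle))⟩
  exact ⟨hX', hX, e, fun h => h.2 rfl, (insert_sdiff_singleton.trans (insert_eq_of_mem he)).symm,
    rfl⟩

theorem Config.induction_trans (S : Set P.E → Prop) (h0 : S ∅)
    (hstep : ∀ X a X', S X → P.Trans X a X' → S X') {X : Set P.E} (hX : P.Config X) : S X := by
  induction h : X.ncard using Nat.strong_induction_on generalizing X with
  | _ n ih =>
    rcases X.eq_empty_or_nonempty with rfl | hne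
    · exact h0
    obtain ⟨e, he, hmax⟩ := exists_maximal hX.1 hne
    have htr := hX.trans_of_maximal he hmax
    exact hstep _ _ _ (ih _ (h ▸ ncard_sdiff_singleton_lt_of_mem he hX.1) htr.1 rfl) htr

end Basic

variable {P Q : PES A}

theorem exists_config_of_simulation (R : Set P.E → Set Q.E → Prop) (h0 : R ∅ ∅)
    (hsim : ∀ X Y a X', R X Y → P.Trans X a X' → ∃ Y', Q.Trans Y a Y' ∧ R X' Y')
    {X : Set P.E} (hX : P.Config X) : ∃ Y, Q.Config Y ∧ R X Y := by
  refine hX.induction_trans (fun X => ∃ Y, Q.Config Y ∧ R X Y) ⟨∅, Q.config_empty, h0⟩ ?_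
  rintro X a X' ⟨Y, -, hR⟩ htr
  obtain ⟨Y', hY', hR'⟩ := hsim X Y a X' hR htr
  exact ⟨Y', hY'.2.1, hR'⟩

theorem WHBisimilar.pTrEq (h : P.WHBisimilar Q) : P.PTrEq Q := by
  obtain ⟨R, h0, hR⟩ := h
  refine ⟨fun X hX => ?_, fun Y hY => ?_⟩
  · obtain ⟨Y, hY, hXY⟩ := exists_config_of_simulation R h0
      (fun X Y a X' hXY => (hR X Y hXY).2.1 a X') hX
    exact ⟨Y, hY, (hR X Y hXY).1⟩
  · obtain ⟨X, hX, hXY⟩ := exists_config_of_simulation (fun Y X => R X Y) h0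
      (fun Y X a Y' hXY => (hR X Y hXY).2.2 a Y') hY
    exact ⟨X, hX, (hR X Y hXY).1⟩

theorem HBisimilar.wHBisimilar (h : P.HBisimilar Q) : P.WHBisimilar Q := by
  obtain ⟨R, h0, hR⟩ := h
  refine ⟨fun X Y => ∃ g, R X Y g, h0, ?_⟩
  rintro X Y ⟨g, hg⟩
  obtain ⟨hiso, hfwd, hbwd⟩ := hR X Y g hg
  refine ⟨⟨g, hiso⟩, fun a X' htr => ?_, fun a Y' htr => ?_⟩
  · obtain ⟨Y', g', hY', hR', -⟩ := hfwd a X' htr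
    exact ⟨Y', hY', g', hR'⟩
  · obtain ⟨X', g', hX', hR', -⟩ := hbwd a Y' htr
    exact ⟨X', hX', g', hR'⟩

theorem HHBisimilar.hBisimilar (h : P.HHBisimilar Q) : P.HBisimilar Q :=
  let ⟨R, hR, _⟩ := h
  ⟨R, hR⟩

theorem PBisimilar.pTrEq (h : P.PBisimilar Q) : P.PTrEq Q := by
  obtain ⟨R, h0, hR⟩ := h
  -- `PIso P Q ∅ ∅` still needs some map `P.E → Q.E`; take it from the pomset of `{e' | e' ≤ e}`.
  have hfun : Nonempty (P.E → Q.E) := by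
    rcases isEmpty_or_nonempty P.E with hE | ⟨⟨e⟩⟩
    · exact ⟨isEmptyElim⟩
    obtain ⟨_, -, ⟨f, -⟩, -⟩ := (hR ∅ ∅ h0).1 _
      ⟨P.config_empty, config_setOf_le e, empty_ssubset.2 ⟨e, P.le_refl e⟩⟩
    exact ⟨f⟩
  have hempty : PIso P Q ∅ ∅ := ⟨hfun.some, bijOn_empty _, by simp, by simp⟩
  refine ⟨fun X hX => ?_, fun Y hY => ?_⟩
  · rcases X.eq_empty_or_nonempty with rfl | hne
    · exact ⟨∅, Q.config_empty, hempty⟩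
    obtain ⟨Y, hY, hXY, -⟩ := (hR ∅ ∅ h0).1 X ⟨P.config_empty, hX, empty_ssubset.2 hne⟩
    exact ⟨Y, hY.2.1, by simpa only [sdiff_empty] using hXY⟩
  · rcases Y.eq_empty_or_nonempty with rfl | hne
    · exact ⟨∅, P.config_empty, hempty⟩
    obtain ⟨X, hX, hXY, -⟩ := (hR ∅ ∅ h0).2 Y ⟨Q.config_empty, hY, empty_ssubset.2 hne⟩
    exact ⟨X, hX.2.1, by simpa only [sdiff_empty] using hXY⟩

/-- Conflict being empty, the pomset of the full event set is the whole structure; the pomsets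
matching the two full event sets give maps both ways, and counting makes the first bijective. -/
theorem PTrEq.iso (hP : P.IsEES) (hQ : Q.IsEES) [Finite P.E] [Finite Q.E] (h : P.PTrEq Q) :
    P.Iso Q := by
  obtain ⟨_, _, f, hf⟩ := h.1 univ (config_univ hP)
  obtain ⟨_, _, g, hg⟩ := h.2 univ (config_univ hQ)
  have hcard : Nat.card Q.E ≤ Nat.card P.E :=
    Nat.card_le_card_of_surjective g (surjOn_univ.1 (hg.1.surjOn.mono (subset_univ _) subset_rfl))
  have hbij : Function.Bijective f := (injOn_univ.1 hf.1.injOn).bijective_of_nat_card_le hcard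
  exact ⟨.ofBijective f hbij, fun e e' => hf.2.1 e (mem_univ e) e' (mem_univ e'),
    fun e e' => iff_of_false (hP e e') (hQ _ _), fun e => hf.2.2 e (mem_univ e)⟩

def IsIsoEquiv (P Q : PES A) (f : P.E ≃ Q.E) : Prop :=
  (∀ e e', P.le e e' ↔ Q.le (f e) (f e')) ∧
    (∀ e e', P.conflict e e' ↔ Q.conflict (f e) (f e')) ∧
    ∀ e, Q.lab (f e) = P.lab e

namespace IsIsoEquiv

variable {f : P.E ≃ Q.E} (hf : IsIsoEquiv P Q f)
include hf

lemma symm : IsIsoEquiv Q P f.symm := by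
  refine ⟨fun q q' => ?_, fun q q' => ?_, fun q => ?_⟩
  · simpa using (hf.1 (f.symm q) (f.symm q')).symm
  · simpa using (hf.2.1 (f.symm q) (f.symm q')).symm
  · simpa using (hf.2.2 (f.symm q)).symm

lemma isoOn (X : Set P.E) : IsoOn P Q f X (f '' X) :=
  ⟨f.injective.injOn.bijOn_image, fun e _ e' _ => hf.1 e e', fun e _ => hf.2.2 e⟩

lemma config_image {X : Set P.E} (hX : P.Config X) : Q.Config (f '' X) := by
  refine ⟨hX.1.image f, ?_, ?_⟩
  · rintro _ ⟨e, he, rfl⟩ _ ⟨e', he', rfl⟩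
    rw [← hf.2.1]
    exact hX.2.1 e he e' he'
  · rintro _ ⟨e, he, rfl⟩ q hq
    refine ⟨f.symm q, hX.2.2 e he _ ?_, f.apply_symm_apply q⟩
    rwa [hf.1, f.apply_symm_apply]

lemma trans_image {X X' : Set P.E} {a : A} (h : P.Trans X a X') :
    Q.Trans (f '' X) a (f '' X') := by
  obtain ⟨hX, hX', e, he, rfl, rfl⟩ := h
  exact ⟨hf.config_image hX, hf.config_image hX', f e, fun h => he (f.injective.mem_set_image.1 h),
    image_insert_eq, hf.2.2 e⟩

lemma pomTrans_image {X X' : Set P.E} (h : P.PomTrans X X') : Q.PomTrans (f '' X) (f '' X') :=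
  ⟨hf.config_image h.1, hf.config_image h.2.1, f.injective.image_strictMono h.2.2⟩

lemma trans_image_symm {X : Set P.E} {Y' : Set Q.E} {a : A} (h : Q.Trans (f '' X) a Y') :
    P.Trans X a (f.symm '' Y') := by
  simpa only [f.symm_image_image] using hf.symm.trans_image h

lemma pomTrans_image_symm {X : Set P.E} {Y' : Set Q.E} (h : Q.PomTrans (f '' X) Y') :
    P.PomTrans X (f.symm '' Y') := by
  simpa only [f.symm_image_image] using hf.symm.pomTrans_image h

theorem hhBisimilar : P.HHBisimilar Q := by
  refine ⟨fun X Y g => P.Config X ∧ Y = f '' X ∧ g = f,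
    ⟨⟨f, P.config_empty, (image_empty f).symm, rfl⟩, ?_⟩, ?_⟩
  · rintro X _ _ ⟨hX, rfl, rfl⟩
    refine ⟨hf.isoOn X, fun a X' htr => ?_, fun a Y' htr => ?_⟩
    · exact ⟨f '' X', f, hf.trans_image htr, ⟨htr.2.1, rfl, rfl⟩, fun _ _ => rfl⟩
    · have htr' := hf.trans_image_symm htr
      exact ⟨_, f, htr', ⟨htr'.2.1, (f.image_symm_image Y').symm, rfl⟩, fun _ _ => rfl⟩
  · rintro X _ _ ⟨hX, rfl, rfl⟩
    refine ⟨fun a X' htr => ⟨htr.1, rfl, rfl⟩, fun a Y' htr => ?_⟩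
    have hY' : Y' ⊆ f '' X := htr.2.2.choose_spec.2.1 ▸ subset_insert _ _
    have hsep : {e ∈ X | f e ∈ Y'} = f.symm '' Y' := by
      ext e
      rw [f.image_symm_eq_preimage, mem_preimage, mem_sep_iff, and_iff_right_iff_imp]
      exact fun he => f.injective.mem_set_image.1 (hY' he)
    rw [hsep]
    exact ⟨hf.symm.config_image htr.1, (f.image_symm_image Y').symm, rfl⟩

theorem pBisimilar : P.PBisimilar Q := by
  refine ⟨fun X Y => P.Config X ∧ Y = f '' X, ⟨P.config_empty, (image_empty f).symm⟩, ?_⟩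
  rintro X _ ⟨hX, rfl⟩
  refine ⟨fun X' htr => ?_, fun Y' htr => ?_⟩
  · refine ⟨f '' X', hf.pomTrans_image htr, ?_, htr.2.1, rfl⟩
    rw [← image_sdiff f.injective]
    exact ⟨f, hf.isoOn _⟩
  · have htr' := hf.pomTrans_image_symm htr
    refine ⟨_, htr', ?_, htr'.2.1, (f.image_symm_image Y').symm⟩
    nth_rw 2 [← f.image_symm_image Y']
    rw [← image_sdiff f.injective]
    exact ⟨f, hf.isoOn _⟩

end IsIsoEquiv

theorem Iso.hhBisimilar (h : P.Iso Q) : P.HHBisimilar Q :=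
  let ⟨_, hf⟩ := h
  IsIsoEquiv.hhBisimilar hf

theorem Iso.pBisimilar (h : P.Iso Q) : P.PBisimilar Q :=
  let ⟨_, hf⟩ := h
  IsIsoEquiv.pBisimilar hf

end PES

theorem finite_ees_spectrum_collapse {A : Type*} (P Q : PES A)
    (hP : P.IsEES) (hQ : Q.IsEES) (hPfin : Finite P.E) (hQfin : Finite Q.E) :
    (PES.PTrEq P Q ↔ PES.Iso P Q) ∧
    (PES.HHBisimilar P Q ↔ PES.Iso P Q) ∧
    (PES.HBisimilar P Q ↔ PES.Iso P Q) ∧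
    (PES.WHBisimilar P Q ↔ PES.Iso P Q) ∧
    (PES.PBisimilar P Q ↔ PES.Iso P Q) := by
  have hb_whb : P.HBisimilar Q → P.WHBisimilar Q := PES.HBisimilar.wHBisimilar
  have ptr_iso : P.PTrEq Q → P.Iso Q := PES.PTrEq.iso hP hQ
  have whb_iso : P.WHBisimilar Q → P.Iso Q := fun h => ptr_iso h.pTrEq
  have iso_hb : P.Iso Q → P.HBisimilar Q := fun h => h.hhBisimilar.hBisimilar
  exact ⟨⟨ptr_iso, fun h => (hb_whb (iso_hb h)).pTrEq⟩,
    ⟨fun h => whb_iso (hb_whb h.hBisimilar), PES.Iso.hhBisimilar⟩,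
    ⟨fun h => whb_iso (hb_whb h), iso_hb⟩,
    ⟨whb_iso, fun h => hb_whb (iso_hb h)⟩,
    ⟨fun h => ptr_iso h.pTrEq, PES.Iso.pBisimilar⟩⟩
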